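/- Let V be a finite-dimensional real inner product space, b ∈ V with ‖b‖ = 1, g ∈ ℝ with |g| < 2, h = √(1 − g²/4), and let q, A, B, λ be as in the Finsleroid setting. Then for y₁ with q(y₁) > 0 and nonzero y₂, the derivative of y ↦ λ(y, y₂) at y₁ applied to the vector b equals A(y₂)/√(B(y₁)B(y₂)) − λ(y₁,y₂)·A(y₁)/B(y₁). -/

import Mathlib

open scoped InnerProductSpace

/-!
Translating `y` along the axis `b` leaves `q y` and `⟪y, y₂⟫ - ⟪b, y⟫ * ⟪b, y₂⟫` unchanged and
shifts `⟪b, y⟫` by `t`, so `A (y + t • b) = A y + t` and `B (y + t • b) = B y + 2 t A y + t²`.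
Along this line `λ(·, y₂)` is an explicit function of one variable, whose derivative at `0` is the
claimed expression. Since `q y₁ > 0`, the square root defining `q` is smooth at `y₁`, so `λ(·, y₂)`
is differentiable there and its Fréchet derivative applied to `b` is this line derivative.
-/

lemma sq_add_mul_mul_add_sq_pos {g x z : ℝ} (hg : |g| < 2) (hxz : x ≠ 0 ∨ z ≠ 0) :
    0 < x ^ 2 + g * x * z + z ^ 2 := by
  have hg' : 0 < 1 - g ^ 2 / 4 := by
    have := sq_lt_sq' (abs_lt.mp hg).1 (abs_lt.mp hg).2
    linarith
  have hsplit : x ^ 2 + g * x * z + z ^ 2 = (x + g / 2 * z) ^ 2 + (1 - g ^ 2 / 4) * z ^ 2 := by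
    ring
  rcases eq_or_ne z 0 with rfl | hz
  · have hx : x ≠ 0 := by simpa using hxz
    simp only [mul_zero, add_zero, ne_eq, OfNat.ofNat_ne_zero, not_false_eq_true, zero_pow]
    positivity
  · rw [hsplit]
    positivity

lemma hasDerivAt_affine_mul_add_div_sqrt_quadratic {a B c K d : ℝ} (hBd : 0 < B * d) :
    HasDerivAt (fun t => ((a + t) * c + K) / √((B + 2 * t * a + t ^ 2) * d))
      (c / √(B * d) - (a * c + K) / √(B * d) * a / B) 0 := by
  have hnum : HasDerivAt (fun t => (a + t) * c + K) c 0 := by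
    simpa using (((hasDerivAt_id (0 : ℝ)).const_add a).mul_const c).add_const K
  have hrad : HasDerivAt (fun t => (B + 2 * t * a + t ^ 2) * d) (2 * a * d) 0 := by
    simpa using ((((hasDerivAt_id (0 : ℝ)).const_mul (2 : ℝ)).mul_const a).const_add B
      |>.add ((hasDerivAt_id (0 : ℝ)).pow 2)).mul_const d
  have hsqrt := hrad.sqrt (by simpa using hBd.ne')
  have hs : √(B * d) ^ 2 = B * d := Real.sq_sqrt hBd.le
  have hs0 : √(B * d) ≠ 0 := (Real.sqrt_pos.mpr hBd).ne'
  have hB : B ≠ 0 := by rintro rfl; simp at hBd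
  refine (hnum.div hsqrt (by simpa using hs0)).congr_deriv ?_
  simp only [mul_zero, zero_mul, add_zero, ne_eq, OfNat.ofNat_ne_zero, not_false_eq_true,
    zero_pow]
  field_simp
  rw [hs]
  ring

section UnitVector

variable {V : Type*} [NormedAddCommGroup V] [InnerProductSpace ℝ V] {b : V}

lemma inner_add_smul_of_norm_eq_one (hb : ‖b‖ = 1) (y : V) (t : ℝ) :
    ⟪b, y + t • b⟫_ℝ = ⟪b, y⟫_ℝ + t := by
  rw [inner_add_right, inner_smul_right, real_inner_self_eq_norm_sq, hb]
  ring

lemma inner_sub_inner_mul_inner_add_smul (hb : ‖b‖ = 1) (y z : V) (t : ℝ) :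
    ⟪y + t • b, z⟫_ℝ - ⟪b, y + t • b⟫_ℝ * ⟪b, z⟫_ℝ = ⟪y, z⟫_ℝ - ⟪b, y⟫_ℝ * ⟪b, z⟫_ℝ := by
  rw [inner_add_smul_of_norm_eq_one hb, inner_add_left, real_inner_smul_left]
  ring

lemma norm_sq_add_smul_of_norm_eq_one (hb : ‖b‖ = 1) (y : V) (t : ℝ) :
    ‖y + t • b‖ ^ 2 = ‖y‖ ^ 2 + 2 * t * ⟪b, y⟫_ℝ + t ^ 2 := by
  rw [norm_add_sq_real, inner_smul_right, norm_smul, real_inner_comm, hb, Real.norm_eq_abs,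
    mul_one, sq_abs]
  ring

end UnitVector

namespace Finsleroid

variable {V : Type*} [NormedAddCommGroup V] [InnerProductSpace ℝ V] {b : V}

noncomputable def q (b y : V) : ℝ := √(‖y‖ ^ 2 - ⟪b, y⟫_ℝ ^ 2)

noncomputable def A (b : V) (g : ℝ) (y : V) : ℝ := ⟪b, y⟫_ℝ + g / 2 * q b y

noncomputable def B (b : V) (g : ℝ) (y : V) : ℝ :=
  ⟪b, y⟫_ℝ ^ 2 + g * ⟪b, y⟫_ℝ * q b y + q b y ^ 2

noncomputable def lam (b : V) (g h : ℝ) (y₁ y₂ : V) : ℝ :=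
  (A b g y₁ * A b g y₂ + h ^ 2 * (⟪y₁, y₂⟫_ℝ - ⟪b, y₁⟫_ℝ * ⟪b, y₂⟫_ℝ)) / √(B b g y₁ * B b g y₂)

lemma sq_q (hb : ‖b‖ = 1) (y : V) : q b y ^ 2 = ‖y‖ ^ 2 - ⟪b, y⟫_ℝ ^ 2 := by
  refine Real.sq_sqrt (sub_nonneg.mpr ?_)
  have := abs_real_inner_le_norm b y
  rw [hb, one_mul] at this
  exact sq_le_sq' (abs_le.mp this).1 (abs_le.mp this).2

lemma q_add_smul (hb : ‖b‖ = 1) (y : V) (t : ℝ) : q b (y + t • b) = q b y := by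
  rw [q, q, norm_sq_add_smul_of_norm_eq_one hb, inner_add_smul_of_norm_eq_one hb]
  congr 1
  ring

lemma A_add_smul (hb : ‖b‖ = 1) (g : ℝ) (y : V) (t : ℝ) :
    A b g (y + t • b) = A b g y + t := by
  rw [A, A, q_add_smul hb, inner_add_smul_of_norm_eq_one hb]
  ring

lemma B_add_smul (hb : ‖b‖ = 1) (g : ℝ) (y : V) (t : ℝ) :
    B b g (y + t • b) = B b g y + 2 * t * A b g y + t ^ 2 := by
  rw [B, B, A, q_add_smul hb, inner_add_smul_of_norm_eq_one hb]
  ring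

lemma B_pos (hb : ‖b‖ = 1) {g : ℝ} (hg : |g| < 2) {y : V} (hy : y ≠ 0) : 0 < B b g y := by
  refine sq_add_mul_mul_add_sq_pos hg ?_
  by_contra! h
  have := sq_q hb y
  rw [h.1, h.2] at this
  exact hy (by simpa using this.symm)

lemma differentiableAt_q {y : V} (hy : 0 < q b y) : DifferentiableAt ℝ (q b) y :=
  ((differentiableAt_id.norm_sq ℝ).sub ((differentiableAt_const b).inner ℝ differentiableAt_id
    |>.pow 2)).sqrt (Real.sqrt_pos.mp hy).ne'

lemma differentiableAt_lam (hb : ‖b‖ = 1) {g : ℝ} (hg : |g| < 2) (h : ℝ) {y₁ y₂ : V}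
    (hy₁ : 0 < q b y₁) (hy₂ : y₂ ≠ 0) : DifferentiableAt ℝ (fun y => lam b g h y y₂) y₁ := by
  have hy₁' : y₁ ≠ 0 := by rintro rfl; simp [q] at hy₁
  have hq := differentiableAt_q hy₁
  have hinner : DifferentiableAt ℝ (fun y : V => ⟪b, y⟫_ℝ) y₁ :=
    (differentiableAt_const b).inner ℝ differentiableAt_id
  have hinner₂ : DifferentiableAt ℝ (fun y : V => ⟪y, y₂⟫_ℝ) y₁ :=
    differentiableAt_id.inner ℝ (differentiableAt_const y₂)
  have hA : DifferentiableAt ℝ (A b g) y₁ := hinner.add (hq.const_mul _)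
  have hB : DifferentiableAt ℝ (B b g) y₁ :=
    ((hinner.pow 2).add ((hinner.const_mul g).mul hq)).add (hq.pow 2)
  have hBB : 0 < B b g y₁ * B b g y₂ := mul_pos (B_pos hb hg hy₁') (B_pos hb hg hy₂)
  simp only [lam, div_eq_mul_inv]
  exact ((hA.mul_const _).add ((hinner₂.sub (hinner.mul_const _)).const_mul _)).mul
    (((hB.mul_const _).sqrt hBB.ne').inv (Real.sqrt_pos.mpr hBB).ne')

lemma hasLineDerivAt_lam (hb : ‖b‖ = 1) {g : ℝ} (hg : |g| < 2) (h : ℝ) {y₁ y₂ : V}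
    (hy₁ : y₁ ≠ 0) (hy₂ : y₂ ≠ 0) :
    HasLineDerivAt ℝ (fun y => lam b g h y y₂)
      (A b g y₂ / √(B b g y₁ * B b g y₂) - lam b g h y₁ y₂ * A b g y₁ / B b g y₁) y₁ b := by
  have hline : (fun t : ℝ => lam b g h (y₁ + t • b) y₂) = fun t =>
      ((A b g y₁ + t) * A b g y₂ + h ^ 2 * (⟪y₁, y₂⟫_ℝ - ⟪b, y₁⟫_ℝ * ⟪b, y₂⟫_ℝ))
        / √((B b g y₁ + 2 * t * A b g y₁ + t ^ 2) * B b g y₂) := by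
    ext t
    rw [lam, A_add_smul hb, B_add_smul hb, inner_sub_inner_mul_inner_add_smul hb]
  rw [HasLineDerivAt, hline, lam]
  exact hasDerivAt_affine_mul_add_div_sqrt_quadratic (mul_pos (B_pos hb hg hy₁) (B_pos hb hg hy₂))

end Finsleroid

theorem finsleroid_lambda_derivative_along_axis_general
    {V : Type*} [NormedAddCommGroup V] [InnerProductSpace ℝ V]
    (b : V) (hb : ‖b‖ = 1) (g h : ℝ) (hg : |g| < 2)
    (q A B : V → ℝ) (lam : V → V → ℝ)
    (hq : ∀ y : V, q y = Real.sqrt (‖y‖ ^ 2 - ⟪b, y⟫_ℝ ^ 2))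
    (hA : ∀ y : V, A y = ⟪b, y⟫_ℝ + (g / 2) * q y)
    (hB : ∀ y : V, B y = ⟪b, y⟫_ℝ ^ 2 + g * ⟪b, y⟫_ℝ * q y + q y ^ 2)
    (hlam : ∀ y₁ y₂ : V, y₁ ≠ 0 → y₂ ≠ 0 →
      lam y₁ y₂ = (A y₁ * A y₂ + h ^ 2 * (⟪y₁, y₂⟫_ℝ - ⟪b, y₁⟫_ℝ * ⟪b, y₂⟫_ℝ))
        / Real.sqrt (B y₁ * B y₂)) :
    ∀ y₁ y₂ : V, 0 < q y₁ → y₂ ≠ 0 →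
      fderiv ℝ (fun y => lam y y₂) y₁ b
        = A y₂ / Real.sqrt (B y₁ * B y₂) - lam y₁ y₂ * A y₁ / B y₁ := by
  intro y₁ y₂ hq₁ hy₂
  obtain rfl : q = Finsleroid.q b := funext hq
  obtain rfl : A = Finsleroid.A b g := funext hA
  obtain rfl : B = Finsleroid.B b g := funext hB
  have hy₁ : y₁ ≠ 0 := by rintro rfl; simp [Finsleroid.q] at hq₁
  have hlam' : ∀ y, y ≠ 0 → lam y y₂ = Finsleroid.lam b g h y y₂ := fun y hy => hlam y y₂ hy hy₂
  have hnear : (fun y => lam y y₂) =ᶠ[nhds y₁] fun y => Finsleroid.lam b g h y y₂ :=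
    (eventually_ne_nhds hy₁).mono hlam'
  rw [hnear.fderiv_eq, hlam' y₁ hy₁,
    ← (Finsleroid.differentiableAt_lam hb hg h hq₁ hy₂).lineDeriv_eq_fderiv,
    (Finsleroid.hasLineDerivAt_lam hb hg h hy₁ hy₂).lineDeriv]

/-- In the Finsleroid setting, for `y₁` with `q(y₁) > 0` and nonzero `y₂`,
the derivative of `y ↦ λ(y, y₂)` at `y₁` applied to the axis vector `b` equals
`A(y₂)/√(B(y₁)B(y₂)) − λ(y₁,y₂)·A(y₁)/B(y₁)`. -/
theorem finsleroid_lambda_derivative_along_axis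
    {V : Type*} [NormedAddCommGroup V] [InnerProductSpace ℝ V] [FiniteDimensional ℝ V]
    (b : V) (hb : ‖b‖ = 1) (g h : ℝ) (hg : |g| < 2)
    (hh : h = Real.sqrt (1 - g ^ 2 / 4))
    (q A B : V → ℝ) (lam : V → V → ℝ)
    (hq : ∀ y : V, q y = Real.sqrt (‖y‖ ^ 2 - ⟪b, y⟫_ℝ ^ 2))
    (hA : ∀ y : V, A y = ⟪b, y⟫_ℝ + (g / 2) * q y)
    (hB : ∀ y : V, B y = ⟪b, y⟫_ℝ ^ 2 + g * ⟪b, y⟫_ℝ * q y + q y ^ 2)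
    (hlam : ∀ y₁ y₂ : V, y₁ ≠ 0 → y₂ ≠ 0 →
      lam y₁ y₂ = (A y₁ * A y₂ + h ^ 2 * (⟪y₁, y₂⟫_ℝ - ⟪b, y₁⟫_ℝ * ⟪b, y₂⟫_ℝ))
        / Real.sqrt (B y₁ * B y₂)) :
    ∀ y₁ y₂ : V, 0 < q y₁ → y₂ ≠ 0 →
      fderiv ℝ (fun y => lam y y₂) y₁ b
        = A y₂ / Real.sqrt (B y₁ * B y₂) - lam y₁ y₂ * A y₁ / B y₁ :=
  finsleroid_lambda_derivative_along_axis_general b hb g h hg q A B lam hq hA hB hlam
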